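/- Let s, p : ℝⁿ×ℝⁿ → ℝ be symmetric measurable functions satisfying the standing bounds, let B_r ⊂ B_{2r} ⊂ ℝⁿ be concentric balls, let v ∈ L^{p⁺}(B_{2r}) satisfy ρ_{s(·,·),p(·,·)}(v; B_{2r}) < ∞, and let η : ℝⁿ → ℝ be bounded and Lipschitz with η = 0 on ℝⁿ \ B_r. Define w : ℝⁿ → ℝ by w = vη on B_{2r} and w = 0 outside B_{2r}. Then ρ_{s(·,·),p(·,·)}(w; ℝⁿ) := ∫_{ℝⁿ}∫_{ℝⁿ} |w(x)−w(y)|^{p(x,y)}/|x−y|^{n+s(x,y)p(x,y)} dy dx < ∞. In particular, w belongs to 𝕎^{s(·,·),p(·,·)}(Ω) for every bounded open Ω ⊇ B_{2r}. -/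

import Mathlib

open MeasureTheory Metric Set Real
open scoped ENNReal NNReal

noncomputable section

abbrev Rn (n : ℕ) := EuclideanSpace ℝ (Fin n)

/-- The variable-power modular `ρ_{s,p}(v;U)` (valued in `ℝ≥0∞`). -/
def modular (n : ℕ) (s p : Rn n → Rn n → ℝ) (v : Rn n → ℝ) (U : Set (Rn n)) : ℝ≥0∞ :=
  ∫⁻ x in U, ∫⁻ y in U,
    ENNReal.ofReal (|v x - v y| ^ p x y / ‖x - y‖ ^ ((n : ℝ) + s x y * p x y))

/-- The cross set `𝒞_Ω = (ℝⁿ×ℝⁿ) \ (Ωᶜ×Ωᶜ)`. -/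
def crossSet (n : ℕ) (Ω : Set (Rn n)) : Set (Rn n × Rn n) :=
  Set.univ \ (Ωᶜ ×ˢ Ωᶜ)

/-- The modular over the cross set `𝒞_Ω`. -/
def crossModular (n : ℕ) (Ω : Set (Rn n)) (s p : Rn n → Rn n → ℝ) (v : Rn n → ℝ) : ℝ≥0∞ :=
  ∫⁻ z in crossSet n Ω,
    ENNReal.ofReal (|v z.1 - v z.2| ^ p z.1 z.2 / ‖z.1 - z.2‖ ^ ((n : ℝ) + s z.1 z.2 * p z.1 z.2))

/-- Infimum of a two-variable function over `U × U`. -/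
def infOn (n : ℕ) (p : Rn n → Rn n → ℝ) (U : Set (Rn n)) : ℝ := sInf (Set.image2 p U U)

/-- Supremum of a two-variable function over `U × U`. -/
def supOn (n : ℕ) (p : Rn n → Rn n → ℝ) (U : Set (Rn n)) : ℝ := sSup (Set.image2 p U U)

/-- Membership in `𝕎^{s(·,·),p(·,·)}(Ω)`. -/
def MemW (n : ℕ) (Ω : Set (Rn n)) (s p : Rn n → Rn n → ℝ) (v : Rn n → ℝ) : Prop :=
  Measurable v ∧
  (∫⁻ x in Ω, ENNReal.ofReal (|v x| ^ infOn n p Ω)) < ⊤ ∧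
  crossModular n Ω s p v < ⊤

/-- The tail seminorm `[v]_{L^∞(U;L^{p-1}_{sp}(ℝⁿ))}`. -/
def tailSemi (n : ℕ) (s p : Rn n → Rn n → ℝ) (v : Rn n → ℝ) (U : Set (Rn n)) : ℝ≥0∞ :=
  essSup (fun x => ∫⁻ y,
    ENNReal.ofReal (|v y| ^ (p x y - 1) / (1 + ‖y‖) ^ ((n : ℝ) + s x y * p x y)))
    (volume.restrict U)

/-- Membership in the tail space `L^∞(Ω;L^{p(·,·)-1}_{s(·,·)p(·,·)}(ℝⁿ))`. -/
def MemTail (n : ℕ) (Ω : Set (Rn n)) (s p : Rn n → Rn n → ℝ) (v : Rn n → ℝ) : Prop :=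
  Measurable v ∧ tailSemi n s p v Ω < ⊤

/-- The nonlocal tail `T(v;x₀,r,ρ)`. -/
def tailT (n : ℕ) (s p : Rn n → Rn n → ℝ) (v : Rn n → ℝ) (x₀ : Rn n) (r ρ : ℝ) : ℝ≥0∞ :=
  ⨆ x ∈ ball x₀ ρ, ∫⁻ y in (ball x₀ r)ᶜ,
    ENNReal.ofReal (|v y| ^ (p x y - 1) / ‖y - x₀‖ ^ ((n : ℝ) + s x y * p x y))

/-- `u` is a weak solution of `𝓛_K u = 0` in `Ω`. -/
def IsWeakSol (n : ℕ) (Ω : Set (Rn n)) (s p K : Rn n → Rn n → ℝ) (u : Rn n → ℝ) : Prop :=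
  MemW n Ω s p u ∧
  ∀ φ : Rn n → ℝ, MemW n Ω s p φ → (∀ᵐ x ∂(volume.restrict Ωᶜ), φ x = 0) →
    (∫ z in crossSet n Ω,
      |u z.1 - u z.2| ^ (p z.1 z.2 - 2) * (u z.1 - u z.2) * (φ z.1 - φ z.2) * K z.1 z.2) = 0

/-- The oscillation `ω_p(r)` of `p` near the diagonal of `Ω`. -/
def oscDiag (n : ℕ) (Ω : Set (Rn n)) (p : Rn n → Rn n → ℝ) (r : ℝ) : ℝ :=
  sSup { d | ∃ z x₁ x₂ y₁ y₂ : Rn n, ball z r ⊆ Ω ∧ x₁ ∈ ball z r ∧ x₂ ∈ ball z r ∧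
    y₁ ∈ ball z r ∧ y₂ ∈ ball z r ∧ d = |p x₁ y₁ - p x₂ y₂| }

/-- Standing assumptions on the variable powers `s` and `p`. -/
structure StandingSP (n : ℕ) (s p : Rn n → Rn n → ℝ) (sm sp pm pp : ℝ) : Prop where
  s_symm : ∀ x y, s x y = s y x
  p_symm : ∀ x y, p x y = p y x
  s_meas : Measurable fun z : Rn n × Rn n => s z.1 z.2
  p_meas : Measurable fun z : Rn n × Rn n => p z.1 z.2
  sm_pos : 0 < sm
  sp_lt_one : sp < 1
  s_bounds : ∀ x y, sm ≤ s x y ∧ s x y ≤ sp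
  pm_gt_one : 1 < pm
  p_bounds : ∀ x y, pm ≤ p x y ∧ p x y ≤ pp

/-- Standing assumptions on the kernel `K`. -/
structure StandingKernel (n : ℕ) (s p K : Rn n → Rn n → ℝ) (Λ : ℝ) : Prop where
  K_symm : ∀ x y, K x y = K y x
  K_meas : Measurable fun z : Rn n × Rn n => K z.1 z.2
  lam_gt_one : 1 < Λ
  K_bounds : ∀ᵐ z ∂(volume : Measure (Rn n × Rn n)),
    Λ⁻¹ / ‖z.1 - z.2‖ ^ ((n : ℝ) + s z.1 z.2 * p z.1 z.2) ≤ K z.1 z.2 ∧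
    K z.1 z.2 ≤ Λ / ‖z.1 - z.2‖ ^ ((n : ℝ) + s z.1 z.2 * p z.1 z.2)

/-- The energy `ℰ(v;Ω)`. -/
def energyE (n : ℕ) (Ω : Set (Rn n)) (p K : Rn n → Rn n → ℝ) (v : Rn n → ℝ) : ℝ≥0∞ :=
  ∫⁻ z in crossSet n Ω,
    ENNReal.ofReal ((1 / p z.1 z.2) * |v z.1 - v z.2| ^ p z.1 z.2 * K z.1 z.2)

/-- `u` minimizes the energy among competitors agreeing with `g` a.e. outside `Ω`. -/
def IsMinimizer (n : ℕ) (Ω : Set (Rn n)) (s p K : Rn n → Rn n → ℝ) (g u : Rn n → ℝ) : Prop :=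
  MemW n Ω s p u ∧ (∀ᵐ x ∂(volume.restrict Ωᶜ), u x = g x) ∧
  ∀ v : Rn n → ℝ, MemW n Ω s p v → (∀ᵐ x ∂(volume.restrict Ωᶜ), v x = g x) →
    energyE n Ω p K u ≤ energyE n Ω p K v

/-!
On `B_{2r} × B_{2r}` the product rule `|w x - w y| ≤ C |v x - v y| + L |x - y| |v x|` bounds the
integrand of `w` by that of `v` plus `(1 + |v x| ^ p⁺) |x - y| ^ ((1 - s) p - n)`, which is
integrable near the diagonal because `(1 - s) p ≥ (1 - s⁺) p⁻ > 0`. For `x ∈ B_r` and `y ∉ B_{2r}`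
we have `|x - y| ≥ r`, and the integrand is at most `(1 + C ^ p⁺) (1 + |v x| ^ p⁺)` times
`|x - y| ^ (-n - s p)`, integrable away from the diagonal because `s p ≥ s⁻ p⁻ > 0`. The variable
exponents are handled by `t ^ a ≤ t ^ lo + t ^ hi` for `a ∈ [lo, hi]`. Since the integrand is
symmetric, the pairs with `x ∉ B_{2r}` contribute no more than those with `x ∈ B_{2r}`.
-/

namespace Real

lemma rpow_le_rpow_add_rpow {t lo a hi : ℝ} (ht : 0 < t) (hlo : lo ≤ a) (hhi : a ≤ hi) :
    t ^ a ≤ t ^ lo + t ^ hi := by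
  rcases le_total t 1 with h | h
  · exact (rpow_le_rpow_of_exponent_ge ht h hlo).trans
      (le_add_of_nonneg_right (rpow_nonneg ht.le _))
  · exact (rpow_le_rpow_of_exponent_le h hhi).trans
      (le_add_of_nonneg_left (rpow_nonneg ht.le _))

lemma rpow_le_one_add_rpow {b q Q : ℝ} (hb : 0 ≤ b) (hq : 0 ≤ q) (hqQ : q ≤ Q) :
    b ^ q ≤ 1 + b ^ Q := by
  rcases hb.eq_or_lt with rfl | hb
  · exact (zero_rpow_le_one q).trans (le_add_of_nonneg_right (rpow_nonneg le_rfl _))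
  · simpa only [rpow_zero] using rpow_le_rpow_add_rpow hb hq hqQ

lemma rpow_add_le_mul_rpow_add_rpow {a b q : ℝ} (ha : 0 ≤ a) (hb : 0 ≤ b) (hq : 1 ≤ q) :
    (a + b) ^ q ≤ 2 ^ (q - 1) * (a ^ q + b ^ q) := by
  lift a to ℝ≥0 using ha
  lift b to ℝ≥0 using hb
  exact_mod_cast NNReal.rpow_add_le_mul_rpow_add_rpow a b hq

lemma rpow_le_of_le_mul_add_mul {d A B C L q Q : ℝ} (hd : 0 ≤ d) (hA : 0 ≤ A) (hB : 0 ≤ B)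
    (hC : 0 ≤ C) (hL : 0 ≤ L) (h : d ≤ C * A + L * B) (hq : 1 ≤ q) (hqQ : q ≤ Q) :
    d ^ q ≤ 2 ^ Q * (1 + C ^ Q) * (1 + L ^ Q) * (A ^ q + B ^ q) := by
  have hq0 : 0 ≤ q := by linarith
  have h2 : (2 : ℝ) ^ (q - 1) ≤ 2 ^ Q := rpow_le_rpow_of_exponent_le one_le_two (by linarith)
  have hCq := rpow_le_one_add_rpow hC hq0 hqQ
  have hLq := rpow_le_one_add_rpow hL hq0 hqQ
  have hAq := rpow_nonneg hA q
  have hBq := rpow_nonneg hB q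
  have hCQ := rpow_nonneg hC Q
  have hLQ := rpow_nonneg hL Q
  calc d ^ q ≤ (C * A + L * B) ^ q := rpow_le_rpow hd h hq0
    _ ≤ 2 ^ (q - 1) * (C ^ q * A ^ q + L ^ q * B ^ q) := by
      rw [← mul_rpow hC hA, ← mul_rpow hL hB]
      exact rpow_add_le_mul_rpow_add_rpow (by positivity) (by positivity) hq
    _ ≤ 2 ^ Q * ((1 + C ^ Q) * (1 + L ^ Q) * (A ^ q + B ^ q)) := by
      gcongr
      nlinarith [mul_le_mul_of_nonneg_right hCq hAq, mul_le_mul_of_nonneg_right hLq hBq,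
        mul_nonneg (mul_nonneg hCQ hLQ) hAq, mul_nonneg hLQ hAq, mul_nonneg hCQ hBq,
        mul_nonneg (mul_nonneg hCQ hLQ) hBq]
    _ = _ := by ring

lemma rpow_le_mul_rpow_one_add {R t a : ℝ} (hR : 0 < R) (ha : a ≤ 0) (ht : R ≤ t) :
    t ^ a ≤ (1 + R⁻¹) ^ (-a) * (1 + t) ^ a := by
  have ht0 : 0 < t := hR.trans_le ht
  have hle : 1 + t ≤ (1 + R⁻¹) * t := by
    have : 1 ≤ R⁻¹ * t := by rw [inv_mul_eq_div, one_le_div hR]; exact ht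
    linarith
  calc t ^ a = (1 + R⁻¹) ^ (-a) * ((1 + R⁻¹) * t) ^ a := by
        rw [mul_rpow (by positivity) ht0.le, ← mul_assoc, ← rpow_add (by positivity),
          neg_add_cancel, rpow_zero, one_mul]
    _ ≤ (1 + R⁻¹) ^ (-a) * (1 + t) ^ a := by
        gcongr ?_ * ?_
        exact rpow_le_rpow_of_nonpos (by positivity) hle ha

lemma rpow_abs_le_of_abs_le_mul {a b C q Q : ℝ} (hC : 0 ≤ C) (h : |a| ≤ C * |b|)
    (hq : 0 ≤ q) (hqQ : q ≤ Q) : |a| ^ q ≤ (1 + C ^ Q) * (1 + |b| ^ Q) := by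
  have hCQ := rpow_nonneg hC Q
  have hbQ := rpow_nonneg (abs_nonneg b) Q
  calc |a| ^ q ≤ 1 + |a| ^ Q := rpow_le_one_add_rpow (abs_nonneg a) hq hqQ
    _ ≤ 1 + (C * |b|) ^ Q := by gcongr; linarith
    _ ≤ (1 + C ^ Q) * (1 + |b| ^ Q) := by
        rw [mul_rpow hC (abs_nonneg b)]; nlinarith

end Real

section Translation

variable {E : Type*} [NormedAddCommGroup E] [MeasurableSpace E] [BorelSpace E]
  (μ : Measure E) [μ.IsAddRightInvariant]

omit [MeasurableSpace E] [BorelSpace E] in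
lemma preimage_sub_right_ball_zero (x : E) (R : ℝ) : (· - x) ⁻¹' ball 0 R = ball x R := by
  ext y; simp [dist_eq_norm]

lemma setLIntegral_ball_norm_sub (f : ℝ → ℝ≥0∞) (x : E) (R : ℝ) :
    ∫⁻ y in ball x R, f ‖x - y‖ ∂μ = ∫⁻ z in ball 0 R, f ‖z‖ ∂μ := by
  simp_rw [← preimage_sub_right_ball_zero x R, norm_sub_rev x]
  exact (measurePreserving_sub_right μ x).setLIntegral_comp_preimage_emb
    (MeasurableEquiv.subRight x).measurableEmbedding (fun z => f ‖z‖) _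

lemma setLIntegral_compl_ball_norm_sub (f : ℝ → ℝ≥0∞) (x : E) (R : ℝ) :
    ∫⁻ y in (ball x R)ᶜ, f ‖x - y‖ ∂μ = ∫⁻ z in (ball 0 R)ᶜ, f ‖z‖ ∂μ := by
  simp_rw [← preimage_sub_right_ball_zero x R, ← preimage_compl, norm_sub_rev x]
  exact (measurePreserving_sub_right μ x).setLIntegral_comp_preimage_emb
    (MeasurableEquiv.subRight x).measurableEmbedding (fun z => f ‖z‖) _

end Translation

section KernelIntegrals

variable {E : Type*} [NormedAddCommGroup E] [NormedSpace ℝ E] [FiniteDimensional ℝ E]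
  [MeasurableSpace E] [BorelSpace E] (μ : Measure E) [μ.IsAddHaarMeasure]

lemma lintegral_ball_norm_rpow_lt_top (R : ℝ) {a : ℝ} (ha : -(Module.finrank ℝ E : ℝ) < a) :
    ∫⁻ z in ball 0 R, ENNReal.ofReal (‖z‖ ^ a) ∂μ < ⊤ := by
  rcases Nat.eq_zero_or_pos (Module.finrank ℝ E) with h0 | hpos
  · have : Subsingleton E := Module.finrank_zero_iff.mp h0
    calc ∫⁻ z in ball 0 R, ENNReal.ofReal (‖z‖ ^ a) ∂μ ≤ ∫⁻ _ in ball 0 R, 1 ∂μ := by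
          refine lintegral_mono fun z => ?_
          rw [Subsingleton.elim z 0, norm_zero]
          exact ENNReal.ofReal_le_one.mpr (Real.zero_rpow_le_one a)
      _ < ⊤ := by rw [setLIntegral_const, one_mul]; exact measure_ball_lt_top
  · refine Integrable.lintegral_lt_top (integrableOn_ball_of_norm_le_rpow (C := 1) (α := -a)
      hpos (by linarith) (Filter.Eventually.of_forall fun z => ?_)
      (measurable_norm.pow_const a).aestronglyMeasurable)
    rw [neg_neg, one_mul, Real.norm_of_nonneg (Real.rpow_nonneg (norm_nonneg z) a)]

lemma lintegral_compl_ball_norm_rpow_lt_top {R a : ℝ} (hR : 0 < R)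
    (ha : a < -(Module.finrank ℝ E : ℝ)) :
    ∫⁻ z in (ball 0 R)ᶜ, ENNReal.ofReal (‖z‖ ^ a) ∂μ < ⊤ := by
  have ha0 : a ≤ 0 := by linarith [(Module.finrank ℝ E).cast_nonneg (α := ℝ)]
  calc ∫⁻ z in (ball 0 R)ᶜ, ENNReal.ofReal (‖z‖ ^ a) ∂μ
      ≤ ∫⁻ z in (ball 0 R)ᶜ, ENNReal.ofReal ((1 + R⁻¹) ^ (-a)) *
          ENNReal.ofReal ((1 + ‖z‖) ^ (-(-a))) ∂μ := by
        refine setLIntegral_mono' measurableSet_ball.compl fun z hz => ?_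
        rw [neg_neg, ← ENNReal.ofReal_mul (by positivity)]
        exact ENNReal.ofReal_le_ofReal (Real.rpow_le_mul_rpow_one_add hR ha0
          (by simpa using hz))
    _ ≤ ENNReal.ofReal ((1 + R⁻¹) ^ (-a)) *
          ∫⁻ z, ENNReal.ofReal ((1 + ‖z‖) ^ (-(-a))) ∂μ := by
        rw [← lintegral_const_mul' _ _ ENNReal.ofReal_ne_top]
        exact setLIntegral_le_lintegral _ _
    _ < ⊤ := ENNReal.mul_lt_top ENNReal.ofReal_lt_top
        (finite_integral_one_add_norm (by linarith))

lemma lintegral_ball_norm_rpow_add_rpow_lt_top (R : ℝ) {a b : ℝ}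
    (ha : -(Module.finrank ℝ E : ℝ) < a) (hb : -(Module.finrank ℝ E : ℝ) < b) :
    ∫⁻ z in ball 0 R, ENNReal.ofReal (‖z‖ ^ a + ‖z‖ ^ b) ∂μ < ⊤ := by
  simp_rw [ENNReal.ofReal_add (Real.rpow_nonneg (norm_nonneg _) _)
    (Real.rpow_nonneg (norm_nonneg _) _)]
  rw [lintegral_add_left (measurable_norm.pow_const a).ennreal_ofReal]
  exact ENNReal.add_lt_top.mpr ⟨lintegral_ball_norm_rpow_lt_top μ R ha,
    lintegral_ball_norm_rpow_lt_top μ R hb⟩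

lemma lintegral_compl_ball_norm_rpow_add_rpow_lt_top {R a b : ℝ} (hR : 0 < R)
    (ha : a < -(Module.finrank ℝ E : ℝ)) (hb : b < -(Module.finrank ℝ E : ℝ)) :
    ∫⁻ z in (ball 0 R)ᶜ, ENNReal.ofReal (‖z‖ ^ a + ‖z‖ ^ b) ∂μ < ⊤ := by
  simp_rw [ENNReal.ofReal_add (Real.rpow_nonneg (norm_nonneg _) _)
    (Real.rpow_nonneg (norm_nonneg _) _)]
  rw [lintegral_add_left (measurable_norm.pow_const a).ennreal_ofReal]
  exact ENNReal.add_lt_top.mpr ⟨lintegral_compl_ball_norm_rpow_lt_top μ hR ha,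
    lintegral_compl_ball_norm_rpow_lt_top μ hR hb⟩

end KernelIntegrals

lemma lintegral_lintegral_le_two_mul_of_symm {α : Type*} [MeasurableSpace α] {μ : Measure α}
    [SFinite μ] {f : α → α → ℝ≥0∞} (hf : Measurable (Function.uncurry f))
    (hsymm : ∀ x y, f x y = f y x) {U : Set α} (hU : MeasurableSet U)
    (hzero : ∀ x ∉ U, ∀ y ∉ U, f x y = 0) :
    ∫⁻ x, ∫⁻ y, f x y ∂μ ∂μ ≤ 2 * ∫⁻ x in U, ∫⁻ y, f x y ∂μ ∂μ := by
  have houter : ∫⁻ x in Uᶜ, ∫⁻ y, f x y ∂μ ∂μ ≤ ∫⁻ x in U, ∫⁻ y, f x y ∂μ ∂μ :=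
    calc ∫⁻ x in Uᶜ, ∫⁻ y, f x y ∂μ ∂μ = ∫⁻ x in Uᶜ, ∫⁻ y in U, f x y ∂μ ∂μ := by
          refine setLIntegral_congr_fun hU.compl fun x hx => ?_
          rw [← lintegral_add_compl _ hU, setLIntegral_congr_fun hU.compl (hzero x hx),
            lintegral_zero, add_zero]
      _ ≤ ∫⁻ x, ∫⁻ y in U, f x y ∂μ ∂μ := setLIntegral_le_lintegral _ _
      _ = ∫⁻ y in U, ∫⁻ x, f x y ∂μ ∂μ := lintegral_lintegral_swap hf.aemeasurable
      _ = ∫⁻ x in U, ∫⁻ y, f x y ∂μ ∂μ := by simp_rw [hsymm _]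
  rw [← lintegral_add_compl _ hU, two_mul]
  gcongr

lemma abs_mul_sub_mul_le_of_lipschitzWith {X : Type*} [PseudoMetricSpace X] {v η : X → ℝ}
    {L : ℝ≥0} {C : ℝ} (hη : LipschitzWith L η) (hηC : ∀ x, |η x| ≤ C) (x y : X) :
    |v x * η x - v y * η y| ≤ C * |v x - v y| + L * (dist x y * |v x|) := by
  have hLip : |η x - η y| ≤ L * dist x y := by
    simpa only [Real.dist_eq] using hη.dist_le_mul x y
  calc |v x * η x - v y * η y| = |η y * (v x - v y) + v x * (η x - η y)| := by ring_nf
    _ ≤ |η y| * |v x - v y| + |v x| * |η x - η y| := by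
        rw [← abs_mul, ← abs_mul]; exact abs_add_le _ _
    _ ≤ C * |v x - v y| + |v x| * (L * dist x y) := by
        gcongr
        exact hηC y
    _ = C * |v x - v y| + L * (dist x y * |v x|) := by ring

lemma abs_indicator_mul_le {X : Type*} {U : Set X} {v η : X → ℝ} {C : ℝ}
    (hηC : ∀ x, |η x| ≤ C) (x : X) : |U.indicator (fun x => v x * η x) x| ≤ C * |v x| := by
  by_cases hx : x ∈ U
  · rw [indicator_of_mem hx, abs_mul, mul_comm]
    exact mul_le_mul_of_nonneg_right (hηC x) (abs_nonneg _)
  · rw [indicator_of_notMem hx, abs_zero]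
    exact mul_nonneg ((abs_nonneg _).trans (hηC x)) (abs_nonneg _)

lemma MeasureTheory.MemLp.lintegral_ofReal_one_add_rpow_lt_top {α : Type*} [MeasurableSpace α]
    {μ : Measure α} [IsFiniteMeasure μ] {f : α → ℝ} {Q : ℝ} (hQ : 0 < Q)
    (hf : MemLp f (ENNReal.ofReal Q) μ) : ∫⁻ x, ENNReal.ofReal (1 + |f x| ^ Q) ∂μ < ⊤ := by
  have hint := hf.integrable_norm_rpow (by simpa using hQ) ENNReal.ofReal_ne_top
  rw [ENNReal.toReal_ofReal hQ.le] at hint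
  simp_rw [ENNReal.ofReal_add zero_le_one (Real.rpow_nonneg (abs_nonneg _) _),
    ENNReal.ofReal_one]
  rw [lintegral_add_left measurable_const, lintegral_one]
  exact ENNReal.add_lt_top.mpr ⟨measure_lt_top μ univ, hint.lintegral_lt_top⟩

lemma lintegral_ofReal_rpow_abs_lt_top {α : Type*} [MeasurableSpace α] {μ : Measure α}
    {U : Set α} (hU : MeasurableSet U) {v w : α → ℝ} {C q Q : ℝ} (hC : 0 ≤ C)
    (hw : ∀ x, |w x| ≤ C * |v x|) (hw0 : ∀ x ∉ U, w x = 0) (hq : 0 < q) (hqQ : q ≤ Q)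
    (hv : ∫⁻ x in U, ENNReal.ofReal (1 + |v x| ^ Q) ∂μ < ⊤) :
    ∫⁻ x, ENNReal.ofReal (|w x| ^ q) ∂μ < ⊤ := by
  calc ∫⁻ x, ENNReal.ofReal (|w x| ^ q) ∂μ
      ≤ ∫⁻ x, U.indicator (fun x => ENNReal.ofReal ((1 + C ^ Q) * (1 + |v x| ^ Q))) x ∂μ := by
        refine lintegral_mono fun x => ?_
        by_cases hx : x ∈ U
        · rw [indicator_of_mem hx]
          exact ENNReal.ofReal_le_ofReal
            (Real.rpow_abs_le_of_abs_le_mul hC (hw x) hq.le hqQ)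
        · rw [indicator_of_notMem hx, hw0 x hx, abs_zero, Real.zero_rpow hq.ne',
            ENNReal.ofReal_zero]
    _ = ENNReal.ofReal (1 + C ^ Q) * ∫⁻ x in U, ENNReal.ofReal (1 + |v x| ^ Q) ∂μ := by
        rw [lintegral_indicator hU, ← lintegral_const_mul' _ _ ENNReal.ofReal_ne_top]
        simp_rw [ENNReal.ofReal_mul (p := 1 + C ^ Q)
          (by have := Real.rpow_nonneg hC Q; linarith)]
    _ < ⊤ := ENNReal.mul_lt_top ENNReal.ofReal_lt_top hv

def modularIntegrand (n : ℕ) (s p : Rn n → Rn n → ℝ) (v : Rn n → ℝ) (x y : Rn n) : ℝ≥0∞ :=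
  ENNReal.ofReal (|v x - v y| ^ p x y / ‖x - y‖ ^ ((n : ℝ) + s x y * p x y))

section ModularIntegrand

variable {n : ℕ} {s p : Rn n → Rn n → ℝ} {v : Rn n → ℝ}

lemma modular_eq_setLIntegral_modularIntegrand (U : Set (Rn n)) :
    modular n s p v U = ∫⁻ x in U, ∫⁻ y in U, modularIntegrand n s p v x y := rfl

lemma modularIntegrand_symm (hs : ∀ x y, s x y = s y x) (hp : ∀ x y, p x y = p y x)
    (x y : Rn n) : modularIntegrand n s p v x y = modularIntegrand n s p v y x := by
  rw [modularIntegrand, modularIntegrand, abs_sub_comm, norm_sub_rev, hs, hp]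

lemma modularIntegrand_self {x : Rn n} (hp : 0 < p x x) : modularIntegrand n s p v x x = 0 := by
  simp [modularIntegrand, Real.zero_rpow hp.ne']

lemma modularIntegrand_of_eq_zero {x y : Rn n} (hp : 0 < p x y) (hx : v x = 0) (hy : v y = 0) :
    modularIntegrand n s p v x y = 0 := by
  simp [modularIntegrand, hx, hy, Real.zero_rpow hp.ne']

lemma measurable_modularIntegrand (hv : Measurable v)
    (hs : Measurable fun z : Rn n × Rn n => s z.1 z.2)
    (hp : Measurable fun z : Rn n × Rn n => p z.1 z.2) :
    Measurable (Function.uncurry (modularIntegrand n s p v)) := by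
  refine ENNReal.measurable_ofReal.comp (Measurable.div ?_ ?_)
  · exact ((hv.comp measurable_fst).sub (hv.comp measurable_snd)).abs.pow hp
  · exact (measurable_fst.sub measurable_snd).norm.pow (measurable_const.add (hs.mul hp))

lemma crossModular_le_modular_univ (hv : Measurable v)
    (hs : Measurable fun z : Rn n × Rn n => s z.1 z.2)
    (hp : Measurable fun z : Rn n × Rn n => p z.1 z.2) (Ω : Set (Rn n)) :
    crossModular n Ω s p v ≤ modular n s p v univ := by
  calc crossModular n Ω s p v ≤ ∫⁻ z, Function.uncurry (modularIntegrand n s p v) z :=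
        setLIntegral_le_lintegral _ _
    _ = modular n s p v univ := by
        rw [Measure.volume_eq_prod,
          lintegral_prod _ (measurable_modularIntegrand hv hs hp).aemeasurable,
          modular_eq_setLIntegral_modularIntegrand, Measure.restrict_univ]
        rfl

end ModularIntegrand

namespace StandingSP

variable {n : ℕ} {s p : Rn n → Rn n → ℝ} {sm sps pm pp : ℝ}
  (hsp : StandingSP n s p sm sps pm pp) {x₀ : Rn n} {r : ℝ} {v w : Rn n → ℝ} {C L : ℝ}
include hsp

lemma one_le_p (x y : Rn n) : 1 ≤ p x y := (hsp.pm_gt_one.trans_le (hsp.p_bounds x y).1).le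

lemma p_pos (x y : Rn n) : 0 < p x y := zero_lt_one.trans_le (hsp.one_le_p x y)

lemma sm_le_sps : sm ≤ sps := (hsp.s_bounds 0 0).1.trans (hsp.s_bounds 0 0).2

lemma pm_le_pp : pm ≤ pp := (hsp.p_bounds 0 0).1.trans (hsp.p_bounds 0 0).2

lemma mul_mem_Icc (x y : Rn n) : s x y * p x y ∈ Icc (sm * pm) (sps * pp) := by
  obtain ⟨hs₁, hs₂⟩ := hsp.s_bounds x y
  obtain ⟨hp₁, hp₂⟩ := hsp.p_bounds x y
  have := hsp.sm_pos
  have := hsp.pm_gt_one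
  constructor <;> nlinarith

lemma one_sub_mul_mem_Icc (x y : Rn n) :
    (1 - s x y) * p x y ∈ Icc ((1 - sps) * pm) ((1 - sm) * pp) := by
  obtain ⟨hs₁, hs₂⟩ := hsp.s_bounds x y
  obtain ⟨hp₁, hp₂⟩ := hsp.p_bounds x y
  have := hsp.sp_lt_one
  have := hsp.pm_gt_one
  constructor <;> nlinarith

lemma infOn_mem_Icc {Ω : Set (Rn n)} (hΩ : Ω.Nonempty) : infOn n p Ω ∈ Icc pm pp := by
  obtain ⟨x, hx⟩ := hΩ
  have hbdd : BddBelow (image2 p Ω Ω) := ⟨pm, by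
    rintro _ ⟨a, -, b, -, rfl⟩; exact (hsp.p_bounds a b).1⟩
  exact ⟨le_csInf ⟨_, mem_image2_of_mem hx hx⟩ (by
      rintro _ ⟨a, -, b, -, rfl⟩; exact (hsp.p_bounds a b).1),
    (csInf_le hbdd (mem_image2_of_mem hx hx)).trans (hsp.p_bounds x x).2⟩

lemma modularIntegrand_le_of_abs_sub_le (hC : 0 ≤ C) (hL : 0 ≤ L) {x y : Rn n}
    (h : |w x - w y| ≤ C * |v x - v y| + L * (‖x - y‖ * |v x|)) :
    modularIntegrand n s p w x y ≤ ENNReal.ofReal (2 ^ pp * (1 + C ^ pp) * (1 + L ^ pp)) *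
      (modularIntegrand n s p v x y + ENNReal.ofReal (1 + |v x| ^ pp) *
        ENNReal.ofReal (‖x - y‖ ^ ((1 - sps) * pm - n) + ‖x - y‖ ^ ((1 - sm) * pp - n))) := by
  rcases eq_or_ne x y with rfl | hxy
  · rw [modularIntegrand_self (hsp.p_pos x x)]; exact zero_le
  set t := ‖x - y‖
  set q := p x y
  have ht : 0 < t := norm_pos_iff.mpr (sub_ne_zero.mpr hxy)
  have hte : 0 < t ^ ((n : ℝ) + s x y * q) := Real.rpow_pos_of_pos ht _
  have hq := hsp.one_le_p x y
  have hqpp := (hsp.p_bounds x y).2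
  have hK : 0 ≤ 2 ^ pp * (1 + C ^ pp) * (1 + L ^ pp) := by
    have := Real.rpow_nonneg hC pp; have := Real.rpow_nonneg hL pp; positivity
  have hg : 0 ≤ 1 + |v x| ^ pp := by have := Real.rpow_nonneg (abs_nonneg (v x)) pp; linarith
  have hnum : |w x - w y| ^ q ≤ 2 ^ pp * (1 + C ^ pp) * (1 + L ^ pp) *
      (|v x - v y| ^ q + (1 + |v x| ^ pp) * t ^ q) := by
    refine (Real.rpow_le_of_le_mul_add_mul (abs_nonneg _) (abs_nonneg _) (by positivity) hC hL
      h hq hqpp).trans (mul_le_mul_of_nonneg_left ?_ hK)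
    rw [Real.mul_rpow ht.le (abs_nonneg _), mul_comm (t ^ q)]
    gcongr
    exact Real.rpow_le_one_add_rpow (abs_nonneg _) (by linarith) hqpp
  have hker : t ^ q / t ^ ((n : ℝ) + s x y * q) ≤
      t ^ ((1 - sps) * pm - n) + t ^ ((1 - sm) * pp - n) := by
    obtain ⟨hlo, hhi⟩ := hsp.one_sub_mul_mem_Icc x y
    rw [← Real.rpow_sub ht]
    exact Real.rpow_le_rpow_add_rpow ht (by linarith) (by linarith)
  rw [modularIntegrand, modularIntegrand, ← ENNReal.ofReal_mul hg, ← ENNReal.ofReal_add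
    (by positivity) (by positivity), ← ENNReal.ofReal_mul hK]
  refine ENNReal.ofReal_le_ofReal ?_
  calc |w x - w y| ^ q / t ^ ((n : ℝ) + s x y * q)
      ≤ 2 ^ pp * (1 + C ^ pp) * (1 + L ^ pp) *
          (|v x - v y| ^ q + (1 + |v x| ^ pp) * t ^ q) / t ^ ((n : ℝ) + s x y * q) :=
        div_le_div_of_nonneg_right hnum hte.le
    _ = 2 ^ pp * (1 + C ^ pp) * (1 + L ^ pp) * (|v x - v y| ^ q / t ^ ((n : ℝ) + s x y * q) +
          (1 + |v x| ^ pp) * (t ^ q / t ^ ((n : ℝ) + s x y * q))) := by ring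
    _ ≤ _ := by gcongr

lemma modularIntegrand_le_of_eq_zero (hC : 0 ≤ C) {x y : Rn n} (hxy : x ≠ y) (hy : w y = 0)
    (hx : |w x| ≤ C * |v x|) :
    modularIntegrand n s p w x y ≤ ENNReal.ofReal ((1 + C ^ pp) * (1 + |v x| ^ pp)) *
      ENNReal.ofReal (‖x - y‖ ^ (-(n + sps * pp)) + ‖x - y‖ ^ (-(n + sm * pm))) := by
  set t := ‖x - y‖
  have ht : 0 < t := norm_pos_iff.mpr (sub_ne_zero.mpr hxy)
  obtain ⟨hlo, hhi⟩ := hsp.mul_mem_Icc x y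
  rw [modularIntegrand, hy, sub_zero, ← ENNReal.ofReal_mul (by
    have := Real.rpow_nonneg hC pp; have := Real.rpow_nonneg (abs_nonneg (v x)) pp; positivity)]
  refine ENNReal.ofReal_le_ofReal ?_
  rw [div_eq_mul_inv, ← Real.rpow_neg ht.le]
  exact mul_le_mul (Real.rpow_abs_le_of_abs_le_mul hC hx (hsp.p_pos x y).le (hsp.p_bounds x y).2)
    (Real.rpow_le_rpow_add_rpow ht (by linarith) (by linarith)) (by positivity) (by positivity)

lemma setLIntegral_ball_modularIntegrand_le (hC : 0 ≤ C) (hL : 0 ≤ L)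
    (hdiff : ∀ x ∈ ball x₀ (2 * r), ∀ y ∈ ball x₀ (2 * r),
      |w x - w y| ≤ C * |v x - v y| + L * (‖x - y‖ * |v x|))
    {x : Rn n} (hx : x ∈ ball x₀ (2 * r)) :
    ∫⁻ y in ball x₀ (2 * r), modularIntegrand n s p w x y ≤
      ENNReal.ofReal (2 ^ pp * (1 + C ^ pp) * (1 + L ^ pp)) *
        ((∫⁻ y in ball x₀ (2 * r), modularIntegrand n s p v x y) +
          ENNReal.ofReal (1 + |v x| ^ pp) * ∫⁻ z : Rn n in ball 0 (4 * r),
            ENNReal.ofReal (‖z‖ ^ ((1 - sps) * pm - n) + ‖z‖ ^ ((1 - sm) * pp - n))) := by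
  set k : ℝ → ℝ≥0∞ := fun t => ENNReal.ofReal (t ^ ((1 - sps) * pm - n) + t ^ ((1 - sm) * pp - n))
  have hsub : ball x₀ (2 * r) ⊆ ball x (4 * r) := by
    intro y hy
    rw [mem_ball] at hx hy ⊢
    linarith [dist_triangle y x₀ x, dist_comm x x₀]
  calc ∫⁻ y in ball x₀ (2 * r), modularIntegrand n s p w x y
      ≤ ∫⁻ y in ball x₀ (2 * r), ENNReal.ofReal (2 ^ pp * (1 + C ^ pp) * (1 + L ^ pp)) *
          (modularIntegrand n s p v x y + ENNReal.ofReal (1 + |v x| ^ pp) * k ‖x - y‖) :=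
        setLIntegral_mono' measurableSet_ball fun y hy =>
          hsp.modularIntegrand_le_of_abs_sub_le hC hL (hdiff x hx y hy)
    _ = ENNReal.ofReal (2 ^ pp * (1 + C ^ pp) * (1 + L ^ pp)) *
          ((∫⁻ y in ball x₀ (2 * r), modularIntegrand n s p v x y) +
            ENNReal.ofReal (1 + |v x| ^ pp) * ∫⁻ y in ball x₀ (2 * r), k ‖x - y‖) := by
        rw [lintegral_const_mul' _ _ ENNReal.ofReal_ne_top,
          lintegral_add_right _ (by fun_prop),
          lintegral_const_mul' _ _ ENNReal.ofReal_ne_top]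
    _ ≤ ENNReal.ofReal (2 ^ pp * (1 + C ^ pp) * (1 + L ^ pp)) *
          ((∫⁻ y in ball x₀ (2 * r), modularIntegrand n s p v x y) +
            ENNReal.ofReal (1 + |v x| ^ pp) * ∫⁻ y in ball x (4 * r), k ‖x - y‖) := by
        gcongr
    _ = _ := by rw [setLIntegral_ball_norm_sub]

lemma setLIntegral_compl_ball_modularIntegrand_le (hr : 0 < r) (hC : 0 ≤ C)
    (hw : ∀ x, |w x| ≤ C * |v x|) (hw0 : ∀ x ∉ ball x₀ r, w x = 0) (x : Rn n) :
    ∫⁻ y in (ball x₀ (2 * r))ᶜ, modularIntegrand n s p w x y ≤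
      ENNReal.ofReal ((1 + C ^ pp) * (1 + |v x| ^ pp)) * ∫⁻ z : Rn n in (ball 0 r)ᶜ,
        ENNReal.ofReal (‖z‖ ^ (-(n + sps * pp)) + ‖z‖ ^ (-(n + sm * pm))) := by
  have hw02 : ∀ y ∈ (ball x₀ (2 * r))ᶜ, w y = 0 := fun y hy =>
    hw0 y fun hy' => hy (ball_subset_ball (by linarith) hy')
  by_cases hx : x ∉ ball x₀ r
  · rw [setLIntegral_congr_fun measurableSet_ball.compl fun y hy =>
      modularIntegrand_of_eq_zero (hsp.p_pos x y) (hw0 x hx) (hw02 y hy), lintegral_zero]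
    exact zero_le
  rw [not_not] at hx
  set k : ℝ → ℝ≥0∞ := fun t => ENNReal.ofReal (t ^ (-(n + sps * pp)) + t ^ (-(n + sm * pm)))
  have hsub : (ball x₀ (2 * r))ᶜ ⊆ (ball x r)ᶜ := by
    refine compl_subset_compl.mpr fun y hy => ?_
    rw [mem_ball] at hx hy ⊢
    linarith [dist_triangle y x x₀]
  calc ∫⁻ y in (ball x₀ (2 * r))ᶜ, modularIntegrand n s p w x y
      ≤ ∫⁻ y in (ball x₀ (2 * r))ᶜ, ENNReal.ofReal ((1 + C ^ pp) * (1 + |v x| ^ pp)) *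
          k ‖x - y‖ := by
        refine setLIntegral_mono' measurableSet_ball.compl fun y hy => ?_
        have hxy : x ≠ y := fun h => hsub hy (h ▸ mem_ball_self hr)
        exact hsp.modularIntegrand_le_of_eq_zero hC hxy (hw02 y hy) (hw x)
    _ ≤ ∫⁻ y in (ball x r)ᶜ, ENNReal.ofReal ((1 + C ^ pp) * (1 + |v x| ^ pp)) *
          k ‖x - y‖ := lintegral_mono_set hsub
    _ = _ := by
        rw [lintegral_const_mul' _ _ ENNReal.ofReal_ne_top, setLIntegral_compl_ball_norm_sub]

lemma exists_lintegral_modularIntegrand_le (hr : 0 < r) (hC : 0 ≤ C) (hL : 0 ≤ L)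
    (hdiff : ∀ x ∈ ball x₀ (2 * r), ∀ y ∈ ball x₀ (2 * r),
      |w x - w y| ≤ C * |v x - v y| + L * (‖x - y‖ * |v x|))
    (hw : ∀ x, |w x| ≤ C * |v x|) (hw0 : ∀ x ∉ ball x₀ r, w x = 0) :
    ∃ K κ : ℝ≥0∞, K ≠ ⊤ ∧ κ ≠ ⊤ ∧ ∀ x ∈ ball x₀ (2 * r),
      ∫⁻ y, modularIntegrand n s p w x y ≤
        K * (∫⁻ y in ball x₀ (2 * r), modularIntegrand n s p v x y) +
          κ * ENNReal.ofReal (1 + |v x| ^ pp) := by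
  have hd : (Module.finrank ℝ (Rn n) : ℝ) = n := by simp
  have hsm := hsp.sm_pos
  have hsps := hsp.sp_lt_one
  have hpm := hsp.pm_gt_one
  have hsm_sps := hsp.sm_le_sps
  have hpm_pp := hsp.pm_le_pp
  have hnear := lintegral_ball_norm_rpow_add_rpow_lt_top volume (4 * r)
    (a := (1 - sps) * pm - n) (b := (1 - sm) * pp - n) (by rw [hd]; nlinarith)
    (by rw [hd]; nlinarith)
  have hfar := lintegral_compl_ball_norm_rpow_add_rpow_lt_top volume hr
    (a := -(n + sps * pp)) (b := -(n + sm * pm)) (by rw [hd]; nlinarith) (by rw [hd]; nlinarith)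
  set K := ENNReal.ofReal (2 ^ pp * (1 + C ^ pp) * (1 + L ^ pp))
  refine ⟨K, K * _ + ENNReal.ofReal (1 + C ^ pp) * _, ENNReal.ofReal_ne_top,
    (ENNReal.add_lt_top.mpr ⟨ENNReal.mul_lt_top ENNReal.ofReal_lt_top hnear,
      ENNReal.mul_lt_top ENNReal.ofReal_lt_top hfar⟩).ne, fun x hx => ?_⟩
  have hg : 0 ≤ 1 + |v x| ^ pp := by have := Real.rpow_nonneg (abs_nonneg (v x)) pp; linarith
  rw [← lintegral_add_compl _ measurableSet_ball]
  refine (add_le_add (hsp.setLIntegral_ball_modularIntegrand_le hC hL hdiff hx)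
    (hsp.setLIntegral_compl_ball_modularIntegrand_le hr hC hw hw0 x)).trans_eq ?_
  rw [ENNReal.ofReal_mul (p := 1 + C ^ pp) (by have := Real.rpow_nonneg hC pp; linarith)]
  ring

theorem modular_univ_lt_top (hr : 0 < r) (hC : 0 ≤ C) (hL : 0 ≤ L) (hv : Measurable v)
    (hwm : Measurable w)
    (hdiff : ∀ x ∈ ball x₀ (2 * r), ∀ y ∈ ball x₀ (2 * r),
      |w x - w y| ≤ C * |v x - v y| + L * (‖x - y‖ * |v x|))
    (hw : ∀ x, |w x| ≤ C * |v x|) (hw0 : ∀ x ∉ ball x₀ r, w x = 0)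
    (hvmod : modular n s p v (ball x₀ (2 * r)) < ⊤)
    (hg : ∫⁻ x in ball x₀ (2 * r), ENNReal.ofReal (1 + |v x| ^ pp) < ⊤) :
    modular n s p w univ < ⊤ := by
  obtain ⟨K, κ, hK, hκ, hbound⟩ := hsp.exists_lintegral_modularIntegrand_le hr hC hL hdiff hw hw0
  have hw02 : ∀ x ∉ ball x₀ (2 * r), w x = 0 := fun x hx =>
    hw0 x fun hx' => hx (ball_subset_ball (by linarith) hx')
  rw [modular_eq_setLIntegral_modularIntegrand, Measure.restrict_univ]
  calc ∫⁻ x, ∫⁻ y, modularIntegrand n s p w x y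
      ≤ 2 * ∫⁻ x in ball x₀ (2 * r), ∫⁻ y, modularIntegrand n s p w x y :=
        lintegral_lintegral_le_two_mul_of_symm (measurable_modularIntegrand hwm hsp.s_meas
          hsp.p_meas) (modularIntegrand_symm hsp.s_symm hsp.p_symm) measurableSet_ball
          fun x hx y hy => modularIntegrand_of_eq_zero (hsp.p_pos x y) (hw02 x hx) (hw02 y hy)
    _ ≤ 2 * ∫⁻ x in ball x₀ (2 * r), (K * (∫⁻ y in ball x₀ (2 * r),
          modularIntegrand n s p v x y) + κ * ENNReal.ofReal (1 + |v x| ^ pp)) := by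
        gcongr 2 * ?_
        exact setLIntegral_mono' measurableSet_ball hbound
    _ = 2 * (K * modular n s p v (ball x₀ (2 * r)) +
          κ * ∫⁻ x in ball x₀ (2 * r), ENNReal.ofReal (1 + |v x| ^ pp)) := by
        rw [lintegral_add_right _ (by fun_prop), lintegral_const_mul' _ _ hK,
          lintegral_const_mul' _ _ hκ, modular_eq_setLIntegral_modularIntegrand]
    _ < ⊤ := by finiteness

end StandingSP

/-- **Lemma `lemueta`.** For `v ∈ L^{p⁺}(B_{2r})` with finite modular on `B_{2r}` and a bounded
Lipschitz cut-off `η` vanishing outside `B_r`, the product `vη` (extended by `0` outside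
`B_{2r}`) has finite modular over all of `ℝⁿ`, and lies in `𝕎^{s,p}(Ω)` for every bounded open
`Ω ⊇ B_{2r}`. -/
theorem cutoff_product_finite_modular
    (n : ℕ) (s p : Rn n → Rn n → ℝ) (sm sps pm pp : ℝ)
    (hsp : StandingSP n s p sm sps pm pp)
    (x₀ : Rn n) (r : ℝ) (hr : 0 < r) (v η : Rn n → ℝ)
    (hvmeas : Measurable v)
    (hvLp : MemLp v (ENNReal.ofReal pp) (volume.restrict (ball x₀ (2 * r))))
    (hvmod : modular n s p v (ball x₀ (2 * r)) < ⊤)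
    (L : ℝ≥0) (hηLip : LipschitzWith L η) (C : ℝ) (hηbdd : ∀ x, |η x| ≤ C)
    (hη0 : ∀ x ∉ ball x₀ r, η x = 0) :
    modular n s p ((ball x₀ (2 * r)).indicator fun x => v x * η x) Set.univ < ⊤ ∧
    ∀ Ω : Set (Rn n), IsOpen Ω → Bornology.IsBounded Ω → ball x₀ (2 * r) ⊆ Ω →
      MemW n Ω s p ((ball x₀ (2 * r)).indicator fun x => v x * η x) := by
  set w := (ball x₀ (2 * r)).indicator fun x => v x * η x
  have hC : 0 ≤ C := (abs_nonneg _).trans (hηbdd x₀)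
  have hwm : Measurable w := (hvmeas.mul hηLip.continuous.measurable).indicator measurableSet_ball
  have hw0 : ∀ x ∉ ball x₀ r, w x = 0 := fun x hx => by
    by_cases hx2 : x ∈ ball x₀ (2 * r)
    · simp only [w, indicator_of_mem hx2, hη0 x hx, mul_zero]
    · exact indicator_of_notMem hx2 _
  have hdiff : ∀ x ∈ ball x₀ (2 * r), ∀ y ∈ ball x₀ (2 * r),
      |w x - w y| ≤ C * |v x - v y| + L * (‖x - y‖ * |v x|) := fun x hx y hy => by
    simp only [w, indicator_of_mem hx, indicator_of_mem hy, ← dist_eq_norm]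
    exact abs_mul_sub_mul_le_of_lipschitzWith hηLip hηbdd x y
  have : IsFiniteMeasure (volume.restrict (ball x₀ (2 * r))) :=
    isFiniteMeasure_restrict.mpr measure_ball_lt_top.ne
  have hpp : 0 < pp := by linarith [hsp.pm_gt_one, hsp.pm_le_pp]
  have hg := hvLp.lintegral_ofReal_one_add_rpow_lt_top hpp
  have hmod := hsp.modular_univ_lt_top hr hC L.coe_nonneg hvmeas hwm hdiff
    (abs_indicator_mul_le hηbdd) hw0 hvmod hg
  refine ⟨hmod, fun Ω _ _ hΩ => ⟨hwm, ?_,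
    (crossModular_le_modular_univ hwm hsp.s_meas hsp.p_meas Ω).trans_lt hmod⟩⟩
  obtain ⟨hpm, hqpp⟩ := hsp.infOn_mem_Icc ⟨x₀, hΩ (mem_ball_self (by linarith))⟩
  exact (setLIntegral_le_lintegral _ _).trans_lt (lintegral_ofReal_rpow_abs_lt_top
    measurableSet_ball hC (abs_indicator_mul_le hηbdd) (fun x hx => indicator_of_notMem hx _)
    (by linarith [hsp.pm_gt_one]) hqpp hg)
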